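/- arXiv:math-ph/0304011 — 6 statements merged into one kernel-verified Lean document; each statement's English description precedes it below -/
import Mathlib

section
/- Let V₁ and V₂ be vector spaces over ℂ, let d₁ : V₁ → V₁ and d₂ : V₂ → V₂ be linear maps with d₁ ∘ d₁ = 0 and d₂ ∘ d₂ = 0, and let ε : V₁ → V₁ be a linear map with ε ∘ ε = id and ε ∘ d₁ = −(d₁ ∘ ε). Define the linear map d : V₁ ⊗ V₂ → V₁ ⊗ V₂ by d = d₁ ⊗ id + ε ⊗ d₂. Then d ∘ d = 0, the subspace (ker d₁) ⊗ (ker d₂) of V₁ ⊗ V₂ is contained in ker d, the composite map (ker d₁) ⊗ (ker d₂) → ker d → (ker d)/(im d) kills (im d₁) ⊗ (ker d₂) + (ker d₁) ⊗ (im d₂), and the induced canonical linear map ((ker d₁)/(im d₁)) ⊗ ((ker d₂)/(im d₂)) → (ker d)/(im d) is a linear isomorphism. -/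
/-!
Over a field every linear map `d` has an inner inverse `h` (`d h d = d`); if `d² = 0`, then
`p := 1 - (d h + h d)` satisfies `d p = 0 = p d`, so `x ↦ [p x]` kills boundaries and is the
identity on homology classes. For `d = d₁ ⊗ 1 + ε ⊗ d₂`, the map `ε ⊗ h₂ + h₁ ⊗ p₂` is a homotopy
from `1` to `p₁ ⊗ p₂` (this uses `ε² = 1` and `ε d₁ = -d₁ ε`), so `[p₁ x] ⊗ [p₂ y] ↦ [p₁ x ⊗ p₂ y]`
inverts the Künneth map `[a] ⊗ [b] ↦ [a ⊗ b]`.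
-/

open TensorProduct LinearMap

theorem LinearMap.exists_comp_comp_eq_self {K V W : Type*} [DivisionRing K] [AddCommGroup V]
    [Module K V] [AddCommGroup W] [Module K W] (f : V →ₗ[K] W) :
    ∃ g : W →ₗ[K] V, f ∘ₗ g ∘ₗ f = f := by
  obtain ⟨s, hs⟩ := f.rangeRestrict.exists_rightInverse_of_surjective f.range_rangeRestrict
  obtain ⟨π, hπ⟩ := (range f).subtype.exists_leftInverse_of_injective (range f).ker_subtype
  refine ⟨s ∘ₗ π, ?_⟩
  calc f ∘ₗ (s ∘ₗ π) ∘ₗ f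
      = (range f).subtype ∘ₗ (f.rangeRestrict ∘ₗ s) ∘ₗ (π ∘ₗ (range f).subtype) ∘ₗ
          f.rangeRestrict := rfl
    _ = f := by rw [hs, hπ]; rfl

section Homology

variable {R V : Type*} [Ring R] [AddCommGroup V] [Module R V]

abbrev LinearMap.homology (d : V →ₗ[R] V) : Type _ :=
  ker d ⧸ (range d).comap (ker d).subtype

structure HomotopyRetract (d : V →ₗ[R] V) where
  htpy : V →ₗ[R] V
  proj : V →ₗ[R] V
  comp_proj : d ∘ₗ proj = 0
  proj_comp : proj ∘ₗ d = 0
  comp_htpy_add_htpy_comp : d ∘ₗ htpy + htpy ∘ₗ d = LinearMap.id - proj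

namespace HomotopyRetract

variable {d : V →ₗ[R] V}

def ofInnerInverse (hd : d ∘ₗ d = 0) (h : V →ₗ[R] V) (hh : d ∘ₗ h ∘ₗ d = d) :
    HomotopyRetract d where
  htpy := h
  proj := LinearMap.id - (d ∘ₗ h + h ∘ₗ d)
  comp_proj := by
    rw [comp_sub, comp_add, comp_id, hh, ← comp_assoc, hd, zero_comp, zero_add, sub_self]
  proj_comp := by
    rw [sub_comp, add_comp, id_comp, comp_assoc, hh, comp_assoc, hd, comp_zero, add_zero, sub_self]
  comp_htpy_add_htpy_comp := (sub_sub_cancel _ _).symm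

theorem nonempty_of_comp_self_eq_zero {K V : Type*} [DivisionRing K] [AddCommGroup V]
    [Module K V] {d : V →ₗ[K] V} (hd : d ∘ₗ d = 0) : Nonempty (HomotopyRetract d) :=
  let ⟨h, hh⟩ := d.exists_comp_comp_eq_self
  ⟨ofInnerInverse hd h hh⟩

variable (r : HomotopyRetract d)

theorem sub_proj_mem_range {z : V} (hz : z ∈ ker d) : z - r.proj z ∈ range d :=
  ⟨r.htpy z, by simpa [mem_ker.1 hz] using congr($r.comp_htpy_add_htpy_comp z)⟩

def toHomology : V →ₗ[R] d.homology :=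
  ((range d).comap (ker d).subtype).mkQ ∘ₗ
    r.proj.codRestrict (ker d) fun x => congr($r.comp_proj x)

theorem toHomology_apply_of_mem_ker {z : V} (hz : z ∈ ker d) :
    r.toHomology z = Submodule.Quotient.mk ⟨z, hz⟩ := by
  rw [toHomology, comp_apply, Submodule.mkQ_apply, Submodule.Quotient.eq, Submodule.mem_comap]
  simpa using neg_mem (r.sub_proj_mem_range hz)

theorem toHomology_comp : r.toHomology ∘ₗ d = 0 := by
  ext x
  have hx : r.proj (d x) = 0 := congr($r.proj_comp x)
  simp [toHomology, hx]

end HomotopyRetract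

end Homology

section Kunneth

variable {R V₁ V₂ : Type*} [CommRing R] [AddCommGroup V₁] [Module R V₁] [AddCommGroup V₂]
  [Module R V₂] {d₁ ε : V₁ →ₗ[R] V₁} {d₂ : V₂ →ₗ[R] V₂}

variable (d₁ ε d₂) in
def tensorDiff : V₁ ⊗[R] V₂ →ₗ[R] V₁ ⊗[R] V₂ :=
  map d₁ LinearMap.id + map ε d₂

variable (d₁ ε d₂) in
@[simp]
theorem tensorDiff_tmul (x : V₁) (y : V₂) :
    tensorDiff d₁ ε d₂ (x ⊗ₜ y) = d₁ x ⊗ₜ y + ε x ⊗ₜ d₂ y :=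
  rfl

theorem tensorDiff_comp_self (hd₁ : d₁ ∘ₗ d₁ = 0) (hd₂ : d₂ ∘ₗ d₂ = 0)
    (hεd : ε ∘ₗ d₁ = -(d₁ ∘ₗ ε)) : tensorDiff d₁ ε d₂ ∘ₗ tensorDiff d₁ ε d₂ = 0 := by
  ext x y
  have h₁ : d₁ (d₁ x) = 0 := congr($hd₁ x)
  have h₂ : d₂ (d₂ y) = 0 := congr($hd₂ y)
  have h₃ : ε (d₁ x) = -d₁ (ε x) := congr($hεd x)
  simp [h₁, h₂, h₃, neg_tmul]

theorem range_map_subtype_le_ker_tensorDiff :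
    range (map (ker d₁).subtype (ker d₂).subtype) ≤ ker (tensorDiff d₁ ε d₂) := by
  rw [range_le_ker_iff]
  ext a b
  simp [mem_ker.1 a.2, mem_ker.1 b.2]

theorem tmul_mem_range_tensorDiff_of_mem_range_left {a : V₁} {b : V₂} (ha : a ∈ range d₁)
    (hb : b ∈ ker d₂) : a ⊗ₜ b ∈ range (tensorDiff d₁ ε d₂) := by
  obtain ⟨x, rfl⟩ := ha
  exact ⟨x ⊗ₜ b, by simp [mem_ker.1 hb]⟩

theorem tmul_mem_range_tensorDiff_of_mem_range_right (hε : ε ∘ₗ ε = LinearMap.id)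
    (hεd : ε ∘ₗ d₁ = -(d₁ ∘ₗ ε)) {a : V₁} {b : V₂} (ha : a ∈ ker d₁) (hb : b ∈ range d₂) :
    a ⊗ₜ b ∈ range (tensorDiff d₁ ε d₂) := by
  obtain ⟨y, rfl⟩ := hb
  have hεa : d₁ (ε a) = 0 := by simpa [mem_ker.1 ha] using congr($hεd a)
  have hεε : ε (ε a) = a := congr($hε a)
  exact ⟨ε a ⊗ₜ y, by simp [hεa, hεε]⟩

variable (d₂) in
noncomputable def kunnethMap (hε : ε ∘ₗ ε = LinearMap.id) (hεd : ε ∘ₗ d₁ = -(d₁ ∘ₗ ε)) :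
    d₁.homology ⊗[R] d₂.homology →ₗ[R] (tensorDiff d₁ ε d₂).homology :=
  Submodule.liftQ _
      (Submodule.mkQ _ ∘ₗ
        (map (ker d₁).subtype (ker d₂).subtype).codRestrict _
          fun _ => range_map_subtype_le_ker_tensorDiff (mem_range_self _ _))
      (sup_le
        (range_le_ker_iff.2 <| TensorProduct.ext' fun a b =>
          (Submodule.Quotient.mk_eq_zero _).2 <|
            tmul_mem_range_tensorDiff_of_mem_range_left a.2 b.2)
        (range_le_ker_iff.2 <| TensorProduct.ext' fun a b =>
          (Submodule.Quotient.mk_eq_zero _).2 <|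
            tmul_mem_range_tensorDiff_of_mem_range_right hε hεd a.2 b.2)) ∘ₗ
    (quotientTensorQuotientEquiv _ _).toLinearMap

theorem kunnethMap_mk_tmul_mk (hε : ε ∘ₗ ε = LinearMap.id) (hεd : ε ∘ₗ d₁ = -(d₁ ∘ₗ ε))
    (a : ker d₁) (b : ker d₂) (h : (a : V₁) ⊗ₜ[R] (b : V₂) ∈ ker (tensorDiff d₁ ε d₂)) :
    kunnethMap d₂ hε hεd (Submodule.Quotient.mk a ⊗ₜ Submodule.Quotient.mk b) =
      Submodule.Quotient.mk ⟨(a : V₁) ⊗ₜ (b : V₂), h⟩ :=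
  rfl

def HomotopyRetract.tensor (r₁ : HomotopyRetract d₁) (r₂ : HomotopyRetract d₂)
    (hε : ε ∘ₗ ε = LinearMap.id) (hεd : ε ∘ₗ d₁ = -(d₁ ∘ₗ ε)) :
    HomotopyRetract (tensorDiff d₁ ε d₂) where
  htpy := map ε r₂.htpy + map r₁.htpy r₂.proj
  proj := map r₁.proj r₂.proj
  comp_proj := by
    ext x y
    have h₁ : d₁ (r₁.proj x) = 0 := congr($r₁.comp_proj x)
    have h₂ : d₂ (r₂.proj y) = 0 := congr($r₂.comp_proj y)
    simp [h₁, h₂]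
  proj_comp := by
    ext x y
    have h₁ : r₁.proj (d₁ x) = 0 := congr($r₁.proj_comp x)
    have h₂ : r₂.proj (d₂ y) = 0 := congr($r₂.proj_comp y)
    simp [h₁, h₂]
  comp_htpy_add_htpy_comp := by
    refine TensorProduct.ext' fun x y => ?_
    have h₁ : d₁ (r₁.htpy x) + r₁.htpy (d₁ x) = x - r₁.proj x :=
      congr($r₁.comp_htpy_add_htpy_comp x)
    have h₂ : d₂ (r₂.htpy y) + r₂.htpy (d₂ y) = y - r₂.proj y :=
      congr($r₂.comp_htpy_add_htpy_comp y)
    have hp : d₂ (r₂.proj y) = 0 := congr($r₂.comp_proj y)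
    have hp' : r₂.proj (d₂ y) = 0 := congr($r₂.proj_comp y)
    have hεε : ε (ε x) = x := congr($hε x)
    have hεd' : ε (d₁ x) = -d₁ (ε x) := congr($hεd x)
    simp only [comp_apply, LinearMap.add_apply, LinearMap.sub_apply, id_apply, tensorDiff_tmul,
      map_add, map_tmul, hεε, hεd', hp, hp', tmul_zero]
    calc _ = x ⊗ₜ (d₂ (r₂.htpy y) + r₂.htpy (d₂ y)) +
          (d₁ (r₁.htpy x) + r₁.htpy (d₁ x)) ⊗ₜ r₂.proj y := by
          simp only [tmul_add, add_tmul, neg_tmul]; abel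
      _ = _ := by rw [h₁, h₂, tmul_sub, sub_tmul]; abel

variable (ε) in
theorem map_toHomology_comp_tensorDiff (r₁ : HomotopyRetract d₁) (r₂ : HomotopyRetract d₂) :
    map r₁.toHomology r₂.toHomology ∘ₗ tensorDiff d₁ ε d₂ = 0 := by
  refine TensorProduct.ext' fun x y => ?_
  have h₁ : r₁.toHomology (d₁ x) = 0 := congr($r₁.toHomology_comp x)
  have h₂ : r₂.toHomology (d₂ y) = 0 := congr($r₂.toHomology_comp y)
  simp [h₁, h₂]

theorem kunnethMap_comp_map_toHomology (hε : ε ∘ₗ ε = LinearMap.id)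
    (hεd : ε ∘ₗ d₁ = -(d₁ ∘ₗ ε)) (r₁ : HomotopyRetract d₁) (r₂ : HomotopyRetract d₂) :
    kunnethMap d₂ hε hεd ∘ₗ map r₁.toHomology r₂.toHomology = (r₁.tensor r₂ hε hεd).toHomology :=
  TensorProduct.ext' fun _ _ => rfl

theorem kunnethMap_bijective (hε : ε ∘ₗ ε = LinearMap.id) (hεd : ε ∘ₗ d₁ = -(d₁ ∘ₗ ε))
    (r₁ : HomotopyRetract d₁) (r₂ : HomotopyRetract d₂) :
    Function.Bijective (kunnethMap d₂ hε hεd) := by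
  let ψ : (tensorDiff d₁ ε d₂).homology →ₗ[R] d₁.homology ⊗[R] d₂.homology :=
    Submodule.liftQ _ (map r₁.toHomology r₂.toHomology ∘ₗ (ker _).subtype) fun z ⟨w, hw⟩ => by
      have hz : (z : V₁ ⊗[R] V₂) = tensorDiff d₁ ε d₂ w := hw.symm
      rw [mem_ker, comp_apply, Submodule.subtype_apply, hz]
      exact congr($(map_toHomology_comp_tensorDiff ε r₁ r₂) w)
  have hψφ : ψ ∘ₗ kunnethMap d₂ hε hεd = LinearMap.id := by
    refine TensorProduct.ext' fun u v => ?_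
    induction u using Submodule.Quotient.induction_on with | H a => ?_
    induction v using Submodule.Quotient.induction_on with | H b => ?_
    show map r₁.toHomology r₂.toHomology ((a : V₁) ⊗ₜ (b : V₂)) =
      Submodule.Quotient.mk a ⊗ₜ Submodule.Quotient.mk b
    rw [map_tmul, r₁.toHomology_apply_of_mem_ker a.2, r₂.toHomology_apply_of_mem_ker b.2]
  have hφψ : kunnethMap d₂ hε hεd ∘ₗ ψ = LinearMap.id := by
    ext z
    show (kunnethMap d₂ hε hεd ∘ₗ map r₁.toHomology r₂.toHomology) z = Submodule.Quotient.mk z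
    rw [kunnethMap_comp_map_toHomology, (r₁.tensor r₂ hε hεd).toHomology_apply_of_mem_ker z.2]
  exact Function.bijective_iff_has_inverse.2
    ⟨ψ, LinearMap.congr_fun hψφ, LinearMap.congr_fun hφψ⟩

end Kunneth

/-- Künneth lemma for two-term complexes (Lemma 3.1), with the super sign rule
encoded by the parity involution `ε` of `V₁`. -/
theorem kunneth_two_term
    {V₁ V₂ : Type*} [AddCommGroup V₁] [Module ℂ V₁] [AddCommGroup V₂] [Module ℂ V₂]
    (d₁ : V₁ →ₗ[ℂ] V₁) (d₂ : V₂ →ₗ[ℂ] V₂)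
    (hd₁ : d₁ ∘ₗ d₁ = 0) (hd₂ : d₂ ∘ₗ d₂ = 0)
    (ε : V₁ →ₗ[ℂ] V₁) (hε : ε ∘ₗ ε = LinearMap.id) (hεd : ε ∘ₗ d₁ = -(d₁ ∘ₗ ε))
    (d : V₁ ⊗[ℂ] V₂ →ₗ[ℂ] V₁ ⊗[ℂ] V₂)
    (hd : d = TensorProduct.map d₁ LinearMap.id + TensorProduct.map ε d₂) :
    d ∘ₗ d = 0 ∧
    LinearMap.range
        (TensorProduct.map (LinearMap.ker d₁).subtype (LinearMap.ker d₂).subtype) ≤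
      LinearMap.ker d ∧
    (∀ (a : LinearMap.ker d₁) (b : LinearMap.ker d₂)
        (h : (a : V₁) ⊗ₜ[ℂ] (b : V₂) ∈ LinearMap.ker d),
        ((a : V₁) ∈ LinearMap.range d₁ ∨ (b : V₂) ∈ LinearMap.range d₂) →
        (Submodule.Quotient.mk (⟨(a : V₁) ⊗ₜ[ℂ] (b : V₂), h⟩ : LinearMap.ker d) :
          LinearMap.ker d ⧸ Submodule.comap (LinearMap.ker d).subtype (LinearMap.range d))
          = 0) ∧
    ∃ φ : ((LinearMap.ker d₁ ⧸ Submodule.comap (LinearMap.ker d₁).subtype (LinearMap.range d₁))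
            ⊗[ℂ]
           (LinearMap.ker d₂ ⧸ Submodule.comap (LinearMap.ker d₂).subtype (LinearMap.range d₂)))
            →ₗ[ℂ]
          (LinearMap.ker d ⧸ Submodule.comap (LinearMap.ker d).subtype (LinearMap.range d)),
      (∀ (a : LinearMap.ker d₁) (b : LinearMap.ker d₂)
          (h : (a : V₁) ⊗ₜ[ℂ] (b : V₂) ∈ LinearMap.ker d),
          φ (Submodule.Quotient.mk a ⊗ₜ[ℂ] Submodule.Quotient.mk b) =
            Submodule.Quotient.mk (⟨(a : V₁) ⊗ₜ[ℂ] (b : V₂), h⟩ : LinearMap.ker d)) ∧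
      Function.Bijective φ := by
  obtain rfl : d = tensorDiff d₁ ε d₂ := hd
  obtain ⟨r₁⟩ := HomotopyRetract.nonempty_of_comp_self_eq_zero hd₁
  obtain ⟨r₂⟩ := HomotopyRetract.nonempty_of_comp_self_eq_zero hd₂
  refine ⟨tensorDiff_comp_self hd₁ hd₂ hεd, range_map_subtype_le_ker_tensorDiff, ?_,
    kunnethMap d₂ hε hεd, kunnethMap_mk_tmul_mk hε hεd, kunnethMap_bijective hε hεd r₁ r₂⟩
  rintro a b - (ha | hb) <;> refine (Submodule.Quotient.mk_eq_zero _).2 ?_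
  · exact tmul_mem_range_tensorDiff_of_mem_range_left ha b.2
  · exact tmul_mem_range_tensorDiff_of_mem_range_right hε hεd a.2 hb
end

section
/- Let L be a finite-dimensional Lie algebra over ℂ carrying a nondegenerate symmetric invariant bilinear form B (invariance: B(⁅a,b⁆,c) = B(a,⁅b,c⁆) for all a,b,c ∈ L). Let x ∈ L be such that ad x is diagonalizable with all eigenvalues in ½ℤ; for j ∈ ½ℤ let g_j denote the eigenspace of ad x with eigenvalue j, so that L = ⊕_{j ∈ ½ℤ} g_j. Let f ∈ g_{−1} (so ⁅x,f⁆ = −f). Then the following are equivalent: (i) the centralizer L^f = {a ∈ L : ⁅f,a⁆ = 0} is contained in ⊕_{j ≤ 0} g_j; (ii) for every j ∈ ½ℤ with j ≤ 1/2 one has ⁅f, g_j⁆ = g_{j−1}, i.e. the image of g_j under ad f is all of g_{j−1}. -/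
lemma good_pair_aux_indep_zero {R M ι : Type*} [Ring R] [AddCommGroup M] [Module R M]
    {p : ι → Submodule R M} (h : iSupIndep p) (μ : ι →₀ M) (hμ : ∀ i, μ i ∈ p i)
    (hsum : (μ.sum fun _ m => m) = 0) (i : ι) : μ i = 0 := by
  classical
  by_cases hi : i ∈ μ.support
  · have hdisj := iSupIndep_def.mp h i
    have h2 : μ i ∈ ⨆ j, ⨆ _ : j ≠ i, p j := by
      have hkey : μ i = -∑ j ∈ μ.support.erase i, μ j := by
        have h3 := Finset.add_sum_erase μ.support (fun j => μ j) hi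
        rw [Finsupp.sum] at hsum
        rw [hsum] at h3
        exact eq_neg_of_add_eq_zero_left h3
      rw [hkey]
      exact neg_mem (Submodule.sum_mem _ fun j hj =>
        (le_iSup₂ (f := fun j (_ : j ≠ i) => p j) j (Finset.ne_of_mem_erase hj)) (hμ j))
    exact (Submodule.disjoint_def.mp hdisj) _ (hμ i) h2
  · exact Finsupp.notMem_support_iff.mp hi

/-- Equivalence of the two definitions (1.10) and (1.11) of a good pair `(x, f)`. -/
theorem good_pair_iff
    {L : Type*} [LieRing L] [LieAlgebra ℂ L] [FiniteDimensional ℂ L]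
    (B : L →ₗ[ℂ] L →ₗ[ℂ] ℂ)
    (hsymm : ∀ a b, B a b = B b a)
    (hinv : ∀ a b c, B ⁅a, b⁆ c = B a ⁅b, c⁆)
    (hnd : ∀ a, (∀ b, B a b = 0) → a = 0)
    (x : L) (g : ℤ → Submodule ℂ L)
    (hg : ∀ k : ℤ, g k = Module.End.eigenspace (LieAlgebra.ad ℂ L x) ((k : ℂ) / 2))
    (hdiag : (⨆ k : ℤ, g k) = ⊤)
    (f : L) (hf : f ∈ g (-2)) :
    (∀ a : L, ⁅f, a⁆ = 0 → a ∈ ⨆ k ≤ (0 : ℤ), g k) ↔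
      (∀ k : ℤ, k ≤ 1 → Submodule.map (LieAlgebra.ad ℂ L f) (g k) = g (k - 2)) := by
  classical
  -- membership criterion
  have hmem : ∀ (k : ℤ) (a : L), a ∈ g k ↔ ⁅x, a⁆ = ((k : ℂ) / 2) • a := by
    intro k a
    rw [hg k, Module.End.mem_eigenspace_iff, LieAlgebra.ad_apply]
  have hBneg : ∀ u v w : L, B ⁅u, v⁆ w = -(B ⁅v, u⁆ w) := by
    intro u v w
    have h : ⁅u, v⁆ = -⁅v, u⁆ := by rw [lie_skew]
    rw [h, map_neg, LinearMap.neg_apply]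
  have hxf : ⁅x, f⁆ = -f := by
    have h := (hmem (-2) f).mp hf
    rw [h]; push_cast; norm_num
  -- ad f shifts degree by -2
  have hD : ∀ (k : ℤ) (a : L), a ∈ g k → ⁅f, a⁆ ∈ g (k - 2) := by
    intro k a ha
    rw [hmem] at ha ⊢
    have h1 : ⁅x, ⁅f, a⁆⁆ = ⁅⁅x, f⁆, a⁆ + ⁅f, ⁅x, a⁆⁆ := leibniz_lie x f a
    rw [hxf, ha, neg_lie, lie_smul] at h1
    rw [h1]
    push_cast
    module
  -- orthogonality of non-dual graded pieces
  have horth : ∀ (j l : ℤ) (a b : L), a ∈ g j → b ∈ g l → j + l ≠ 0 → B a b = 0 := by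
    intro j l a b ha hb hjl
    have ha' := (hmem j a).mp ha
    have hb' := (hmem l b).mp hb
    have key : ((j : ℂ) / 2) * B a b = -(((l : ℂ) / 2) * B a b) := by
      calc ((j : ℂ) / 2) * B a b = B (((j : ℂ) / 2) • a) b := by
            rw [map_smul]; rfl
        _ = B ⁅x, a⁆ b := by rw [ha']
        _ = -(B ⁅a, x⁆ b) := hBneg x a b
        _ = -(B a ⁅x, b⁆) := by rw [hinv]
        _ = -(B a (((l : ℂ) / 2) • b)) := by rw [hb']
        _ = -(((l : ℂ) / 2) * B a b) := by rw [map_smul]; rfl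
    have h2 : (((j : ℂ) + l) / 2) * B a b = 0 := by linear_combination key
    have h3 : ((j : ℂ) + l) / 2 ≠ 0 := by
      have : ((j : ℂ) + l) ≠ 0 := by exact_mod_cast fun h => hjl (by exact_mod_cast h)
      simpa using this
    exact (mul_eq_zero.mp h2).resolve_left h3
  -- nondegeneracy of the pairing g k × g (-k)
  have hndk : ∀ (k : ℤ) (a : L), a ∈ g k → (∀ b ∈ g (-k), B a b = 0) → a = 0 := by
    intro k a ha h0
    apply hnd
    intro b
    have hb : b ∈ ⨆ l, g l := by rw [hdiag]; trivial
    have hle : (⨆ l, g l) ≤ LinearMap.ker (B a) := by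
      refine iSup_le fun l c hc => ?_
      simp only [LinearMap.mem_ker]
      by_cases hl : l = -k
      · exact h0 c (hl ▸ hc)
      · exact horth k l a c ha hc (fun h => hl (by omega))
    exact hle hb
  -- dimensions of dual pieces agree
  have hdim : ∀ j : ℤ, Module.finrank ℂ (g j) = Module.finrank ℂ (g (-j)) := by
    have hle : ∀ j : ℤ, Module.finrank ℂ (g j) ≤ Module.finrank ℂ (g (-j)) := by
      intro j
      have hinj : Function.Injective (B.domRestrict₁₂ (g j) (g (-j))) := by
        rw [← LinearMap.ker_eq_bot, LinearMap.ker_eq_bot']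
        intro a h0
        have : (a : L) = 0 := by
          refine hndk j a a.2 fun b hb => ?_
          have := congrFun (congrArg DFunLike.coe h0) ⟨b, hb⟩
          simpa [LinearMap.domRestrict₁₂_apply] using this
        exact Subtype.ext this
      have := LinearMap.finrank_le_finrank_of_injective hinj
      rwa [Subspace.dual_finrank_eq (V := g (-j))] at this
    intro j
    have h1 := hle j
    have h2 := hle (-j)
    rw [neg_neg] at h2
    omega
  set D := LieAlgebra.ad ℂ L f with hDdef
  have hDapp : ∀ a : L, D a = ⁅f, a⁆ := fun a => rfl
  -- surjectivity implies injectivity on the dual piece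
  have inj_of_surj : ∀ k : ℤ, Submodule.map D (g (2 - k)) = g (-k) →
      ∀ a ∈ g k, ⁅f, a⁆ = 0 → a = 0 := by
    intro k hsurj a ha h0
    refine hndk k a ha fun b hb => ?_
    rw [← hsurj] at hb
    obtain ⟨c, hc, rfl⟩ := hb
    rw [hDapp]
    calc B a ⁅f, c⁆ = B ⁅a, f⁆ c := (hinv a f c).symm
      _ = -(B ⁅f, a⁆ c) := hBneg a f c
      _ = 0 := by rw [h0]; simp
  -- injectivity implies surjectivity on the dual piece
  have surj_of_inj : ∀ k : ℤ, (∀ a ∈ g k, ⁅f, a⁆ = 0 → a = 0) →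
      Submodule.map D (g (2 - k)) = g (-k) := by
    intro k hinj
    set W := Submodule.map D (g (2 - k)) with hW
    have hWle : W ≤ g (-k) := by
      rintro _ ⟨c, hc, rfl⟩
      rw [hDapp]
      have h2 := hD (2 - k) c hc
      rwa [show (2 : ℤ) - k - 2 = -k by omega] at h2
    have hρinj : Function.Injective (B.domRestrict₁₂ (g k) W) := by
      rw [← LinearMap.ker_eq_bot, LinearMap.ker_eq_bot']
      intro a h0
      have haz : (a : L) = 0 := by
        refine hinj a a.2 ?_
        have hfa : ⁅f, (a : L)⁆ ∈ g (k - 2) := hD k a a.2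
        refine hndk (k - 2) _ hfa fun b hb => ?_
        have hb' : b ∈ g (2 - k) := by convert hb using 2; omega
        have hfb : ⁅f, b⁆ ∈ W := ⟨b, hb', rfl⟩
        have h1 := congrFun (congrArg DFunLike.coe h0) ⟨⁅f, b⁆, hfb⟩
        simp only [LinearMap.domRestrict₁₂_apply, LinearMap.zero_apply] at h1
        -- h1 : B a ⁅f,b⁆ = 0 ; want B ⁅f,a⁆ b = 0
        have h2 : B (a : L) ⁅f, b⁆ = -(B ⁅f, (a : L)⁆ b) := by
          calc B (a : L) ⁅f, b⁆ = B ⁅(a : L), f⁆ b := (hinv _ f b).symm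
            _ = -(B ⁅f, (a : L)⁆ b) := hBneg (a : L) f b
        rw [h1] at h2
        exact neg_eq_zero.mp h2.symm
      exact Subtype.ext haz
    have hd1 : Module.finrank ℂ (g k) ≤ Module.finrank ℂ W := by
      have := LinearMap.finrank_le_finrank_of_injective hρinj
      rwa [Subspace.dual_finrank_eq (V := W)] at this
    have hd2 : Module.finrank ℂ (g (-k)) ≤ Module.finrank ℂ W := by
      have := hdim k
      omega
    exact Submodule.eq_of_le_of_finrank_le hWle hd2
  -- independence of the graded pieces
  have hindep : iSupIndep g := by
    have h1 : g = fun k : ℤ => Module.End.eigenspace (LieAlgebra.ad ℂ L x) ((k : ℂ) / 2) :=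
      funext hg
    rw [h1]
    refine (Module.End.eigenspaces_iSupIndep (LieAlgebra.ad ℂ L x)).comp ?_
    intro a b hab
    field_simp at hab
    exact_mod_cast hab
  constructor
  · -- (i) → (ii)
    intro h k hk
    have hinj : ∀ a ∈ g (2 - k), ⁅f, a⁆ = 0 → a = 0 := by
      intro a ha h0
      have hmem' := h a h0
      have hle : (⨆ j, ⨆ _ : j ≤ (0 : ℤ), g j) ≤ ⨆ j, ⨆ _ : j ≠ 2 - k, g j := by
        refine iSup₂_le fun j hj => ?_
        exact le_iSup₂ (f := fun j (_ : j ≠ 2 - k) => g j) j (by omega)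
      exact (Submodule.disjoint_def.mp (iSupIndep_def.mp hindep (2 - k))) a ha (hle hmem')
    have h2 := surj_of_inj (2 - k) hinj
    rw [show (2 : ℤ) - (2 - k) = k by omega, show -((2 : ℤ) - k) = k - 2 by omega] at h2
    exact h2
  · -- (ii) → (i)
    intro h a h0
    have ha : a ∈ ⨆ k, g k := by rw [hdiag]; trivial
    obtain ⟨μ, hμ, hsum⟩ := (Submodule.mem_iSup_iff_exists_finsupp g a).mp ha
    -- each component is killed by ad f
    have hcomp : ∀ j : ℤ, ⁅f, μ j⁆ = 0 := by
      set ν : ℤ →₀ L :=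
        Finsupp.equivMapDomain (Equiv.addRight (-2 : ℤ))
          (Finsupp.mapRange (fun m => ⁅f, m⁆) (lie_zero f) μ) with hν
      have hνapp : ∀ l : ℤ, ν l = ⁅f, μ (l + 2)⁆ := by
        intro l
        rw [hν, Finsupp.equivMapDomain_apply, Finsupp.mapRange_apply]
        congr 1
      have hνmem : ∀ l : ℤ, ν l ∈ g l := by
        intro l
        rw [hνapp]
        have h2 := hD (l + 2) _ (hμ (l + 2))
        rwa [show l + 2 - 2 = l by omega] at h2
      have hνsum : (ν.sum fun _ m => m) = 0 := by
        rw [hν, Finsupp.sum_equivMapDomain, Finsupp.sum_mapRange_index (by simp)]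
        have h1 : (μ.sum fun _ m => ⁅f, m⁆) = ⁅f, a⁆ := by
          rw [← hsum]
          exact (map_finsuppSum D μ fun _ m => m).symm
        rw [h1, h0]
      intro j
      have h2 := good_pair_aux_indep_zero hindep ν hνmem hνsum (j - 2)
      rw [hνapp] at h2
      rwa [show j - 2 + 2 = j by omega] at h2
    have hpos : ∀ j : ℤ, 1 ≤ j → μ j = 0 := by
      intro j hj
      have hsurj : Submodule.map D (g (2 - j)) = g (-j) := by
        have h2 := h (2 - j) (by omega)
        rwa [show (2 : ℤ) - j - 2 = -j by omega] at h2
      exact inj_of_surj j hsurj (μ j) (hμ j) (hcomp j)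
    rw [← hsum]
    refine Submodule.sum_mem _ fun j hj => ?_
    have hj0 : j ≤ 0 := by
      by_contra hc
      exact (Finsupp.mem_support_iff.mp hj) (hpos j (by omega))
    exact (le_iSup₂ (f := fun k (_ : k ≤ (0 : ℤ)) => g k) j hj0) (hμ j)
end

section
/- Let L be a finite-dimensional Lie algebra over ℂ carrying a nondegenerate symmetric invariant bilinear form B (invariance: B(⁅a,b⁆,c) = B(a,⁅b,c⁆) for all a,b,c ∈ L). Let x ∈ L be such that ad x is diagonalizable with all eigenvalues in ½ℤ; for j ∈ ½ℤ let g_j denote the eigenspace of ad x with eigenvalue j, so that L = ⊕_{j ∈ ½ℤ} g_j. Set g₊ = ⊕_{j > 0} g_j and g₋ = ⊕_{j < 0} g_j. Let j ∈ ½ℤ, u ∈ g_j and v ∈ g_{−j}. Then g₊ and g₋ are invariant under (ad u) ∘ (ad v) and under ad⁅u,v⁆, and tr_{g₋}((ad u) ∘ (ad v)) = tr_{g₊}((ad u) ∘ (ad v)) − tr_{g₊}(ad⁅u,v⁆), where tr_{g₊} and tr_{g₋} denote the traces of the restrictions of these operators to g₊ and g₋ respectively. -/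
/-!
The form `B` pairs `g_i` only with `g_{-i}`, so it restricts to a perfect pairing `g₋ × g₊ → ℂ`.
By invariance, `(ad u ∘ ad v)|g₋` is adjoint under this pairing to `(ad v ∘ ad u)|g₊`, and
adjoint maps have equal traces. Finally `ad v ∘ ad u = ad u ∘ ad v - ad ⁅u, v⁆` by the Jacobi
identity.
-/

open LinearMap Module Module.End LieAlgebra

theorem Submodule.mapsTo_biSup {R M ι : Type*} [Semiring R] [AddCommMonoid M] [Module R M]
    {p : ι → Submodule R M} {T : M →ₗ[R] M} (h : ∀ i, ∀ z ∈ p i, T z ∈ p i) {P : ι → Prop} :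
    ∀ z ∈ ⨆ i, ⨆ (_ : P i), p i, T z ∈ ⨆ i, ⨆ (_ : P i), p i :=
  iSup₂_le (a := (⨆ i, ⨆ (_ : P i), p i).comap T) fun i hi z hz =>
    le_iSup₂ (f := fun i (_ : P i) => p i) i hi (h i z hz)

namespace LinearMap

theorem trace_eq_of_isPerfPair_of_adjoint {R M N : Type*} [CommRing R] [AddCommGroup M]
    [Module R M] [AddCommGroup N] [Module R N] [Free R N] [Module.Finite R N]
    (p : M →ₗ[R] N →ₗ[R] R) [p.IsPerfPair] {f : M →ₗ[R] M} {g : N →ₗ[R] N}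
    (h : ∀ m n, p (f m) n = p m (g n)) : trace R M f = trace R N g := by
  have hconj : p.toPerfPair.conj f = Dual.transpose (R := R) g := by
    ext φ n
    obtain ⟨m, rfl⟩ := p.toPerfPair.surjective φ
    simp [LinearEquiv.conj_apply_apply, h, Dual.transpose_apply]
  rw [← trace_conj' f p.toPerfPair, hconj, trace_transpose']

theorem separatingLeft_domRestrict₁₂_iSup {R M : Type*} [CommRing R] [AddCommGroup M]
    [Module R M] {B : LinearMap.BilinForm R M} {g : ℤ → Submodule R M} (hB : B.SeparatingLeft)
    (htop : ⨆ k, g k = ⊤) (horth : ∀ i j, i + j ≠ 0 → ∀ a ∈ g i, ∀ b ∈ g j, B a b = 0)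
    {P Q : ℤ → Prop} (hPQ : ∀ i, P i → Q (-i)) :
    (B.domRestrict₁₂ (⨆ i, ⨆ (_ : P i), g i) (⨆ j, ⨆ (_ : Q j), g j)).SeparatingLeft := by
  rintro ⟨a, ha⟩ hQ
  suffices ⨆ j, g j ≤ ker (B a) from Subtype.ext <| hB a fun b => this (htop ▸ Submodule.mem_top)
  refine iSup_le fun j b hb => ?_
  by_cases hj : Q j
  · exact hQ ⟨b, Submodule.mem_iSup_of_mem j (Submodule.mem_iSup_of_mem hj hb)⟩
  · have hPj : ⨆ i, ⨆ (_ : P i), g i ≤ ker (B.flip b) := iSup₂_le fun i hi a' ha' => by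
      have hij : i + j ≠ 0 := by
        rintro hij
        obtain rfl : j = -i := by omega
        exact hj (hPQ i hi)
      exact horth i j hij a' ha' b hb
    exact hPj ha

theorem isPerfPair_domRestrict₁₂_iSup {K M : Type*} [Field K] [AddCommGroup M] [Module K M]
    [FiniteDimensional K M] {B : LinearMap.BilinForm K M} {g : ℤ → Submodule K M}
    (hB : B.SeparatingLeft) (htop : ⨆ k, g k = ⊤)
    (horth : ∀ i j, i + j ≠ 0 → ∀ a ∈ g i, ∀ b ∈ g j, B a b = 0)
    {P Q : ℤ → Prop} (hPQ : ∀ i, P i → Q (-i)) (hQP : ∀ j, Q j → P (-j)) :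
    (B.domRestrict₁₂ (⨆ i, ⨆ (_ : P i), g i) (⨆ j, ⨆ (_ : Q j), g j)).IsPerfPair := by
  refine .of_injective ?_ ?_ <;> refine ker_eq_bot.mp (separatingLeft_iff_ker_eq_bot.mp ?_)
  · exact separatingLeft_domRestrict₁₂_iSup hB htop horth hPQ
  · have hBflip : B.flip.SeparatingLeft :=
      flip_separatingLeft.mpr (BilinForm.Nondegenerate.ofSeparatingLeft hB).2
    exact separatingLeft_domRestrict₁₂_iSup hBflip htop
      (fun i j hij a ha b hb => horth j i (by omega) b hb a ha) hQP

end LinearMap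

section LieAlgebra

variable {R L : Type*} [CommRing R] [LieRing L] [LieAlgebra R L] {B : LinearMap.BilinForm R L}

theorem LinearMap.BilinForm.lieInvariant_of_apply_lie_eq
    (hB : ∀ a b c, B ⁅a, b⁆ c = B a ⁅b, c⁆) : B.lieInvariant L := fun a b c => by
  rw [← lie_skew, map_neg, LinearMap.neg_apply, hB]

theorem LinearMap.BilinForm.lieInvariant.apply_lie_lie (hB : B.lieInvariant L) (u v a b : L) :
    B ⁅u, ⁅v, a⁆⁆ b = B a ⁅v, ⁅u, b⁆⁆ := by
  rw [hB, hB, neg_neg]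

variable {x a b : L} {μ ν : R}

theorem lie_mem_eigenspace_ad (ha : a ∈ eigenspace (ad R L x) μ)
    (hb : b ∈ eigenspace (ad R L x) ν) : ⁅a, b⁆ ∈ eigenspace (ad R L x) (μ + ν) := by
  rw [mem_eigenspace_iff, ad_apply] at ha hb ⊢
  rw [leibniz_lie, ha, hb, smul_lie, lie_smul, add_smul]

theorem LinearMap.BilinForm.lieInvariant.apply_eq_zero_of_mem_eigenspace_ad [NoZeroDivisors R]
    (hB : B.lieInvariant L) (hμν : μ + ν ≠ 0) (ha : a ∈ eigenspace (ad R L x) μ)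
    (hb : b ∈ eigenspace (ad R L x) ν) : B a b = 0 := by
  rw [mem_eigenspace_iff, ad_apply] at ha hb
  have h := hB x a b
  rw [ha, hb, map_smul, map_smul, smul_apply, smul_eq_mul, smul_eq_mul] at h
  have : (μ + ν) * B a b = 0 := by linear_combination h
  exact (mul_eq_zero.mp this).resolve_left hμν

end LieAlgebra

section HalfGrading

variable {K L : Type*} [Field K] [LieRing L] [LieAlgebra K L] {x a b : L} {g : ℤ → Submodule K L}

theorem halfGrading_lie_mem (hg : ∀ k : ℤ, g k = eigenspace (ad K L x) ((k : K) / 2))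
    {i j : ℤ} (ha : a ∈ g i) (hb : b ∈ g j) : ⁅a, b⁆ ∈ g (i + j) := by
  rw [hg] at ha hb ⊢
  simpa only [Int.cast_add, add_div] using lie_mem_eigenspace_ad ha hb

theorem halfGrading_lie_lie_mem (hg : ∀ k : ℤ, g k = eigenspace (ad K L x) ((k : K) / 2))
    {i j : ℤ} {u v z : L} (hu : u ∈ g i) (hv : v ∈ g (-i)) (hz : z ∈ g j) :
    ⁅u, ⁅v, z⁆⁆ ∈ g j := by
  simpa using halfGrading_lie_mem hg hu (halfGrading_lie_mem hg hv hz)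

theorem halfGrading_apply_eq_zero [CharZero K]
    (hg : ∀ k : ℤ, g k = eigenspace (ad K L x) ((k : K) / 2))
    {B : LinearMap.BilinForm K L} (hB : B.lieInvariant L) {i j : ℤ} (hij : i + j ≠ 0)
    (ha : a ∈ g i) (hb : b ∈ g j) : B a b = 0 := by
  rw [hg] at ha hb
  refine hB.apply_eq_zero_of_mem_eigenspace_ad ?_ ha hb
  rw [← add_div, ← Int.cast_add]
  exact div_ne_zero (Int.cast_ne_zero.mpr hij) two_ne_zero

end HalfGrading

theorem trace_identity_5_12_general
    {L : Type*} [LieRing L] [LieAlgebra ℂ L] [FiniteDimensional ℂ L]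
    (B : L →ₗ[ℂ] L →ₗ[ℂ] ℂ)
    (hinv : ∀ a b c, B ⁅a, b⁆ c = B a ⁅b, c⁆)
    (hnd : ∀ a, (∀ b, B a b = 0) → a = 0)
    (x : L) (g : ℤ → Submodule ℂ L)
    (hg : ∀ k : ℤ, g k = Module.End.eigenspace (LieAlgebra.ad ℂ L x) ((k : ℂ) / 2))
    (hdiag : (⨆ k : ℤ, g k) = ⊤)
    (gp gm : Submodule ℂ L)
    (hgp : gp = ⨆ k > (0 : ℤ), g k) (hgm : gm = ⨆ k < (0 : ℤ), g k)
    (k : ℤ) (u v : L) (hu : u ∈ g k) (hv : v ∈ g (-k))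
    (A C : L →ₗ[ℂ] L)
    (hA : A = (LieAlgebra.ad ℂ L u) ∘ₗ (LieAlgebra.ad ℂ L v))
    (hC : C = LieAlgebra.ad ℂ L ⁅u, v⁆) :
    (∀ z ∈ gp, A z ∈ gp) ∧ (∀ z ∈ gm, A z ∈ gm) ∧
    (∀ z ∈ gp, C z ∈ gp) ∧ (∀ z ∈ gm, C z ∈ gm) ∧
    ∀ (hAp : ∀ z ∈ gp, A z ∈ gp) (hAm : ∀ z ∈ gm, A z ∈ gm)
      (hCp : ∀ z ∈ gp, C z ∈ gp),
      LinearMap.trace ℂ gm (A.restrict hAm) =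
        LinearMap.trace ℂ gp (A.restrict hAp) -
          LinearMap.trace ℂ gp (C.restrict hCp) := by
  subst hgp hgm hA hC
  have hAg : ∀ j, ∀ z ∈ g j, ⁅u, ⁅v, z⁆⁆ ∈ g j := fun j z hz =>
    halfGrading_lie_lie_mem hg hu hv hz
  have hA'g : ∀ j, ∀ z ∈ g j, ⁅v, ⁅u, z⁆⁆ ∈ g j := fun j z hz =>
    halfGrading_lie_lie_mem hg hv (by rwa [neg_neg]) hz
  have hCg : ∀ j, ∀ z ∈ g j, ⁅⁅u, v⁆, z⁆ ∈ g j := fun j z hz => by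
    simpa using halfGrading_lie_mem hg (halfGrading_lie_mem hg hu hv) hz
  refine ⟨Submodule.mapsTo_biSup (T := ad ℂ L u ∘ₗ ad ℂ L v) hAg,
    Submodule.mapsTo_biSup (T := ad ℂ L u ∘ₗ ad ℂ L v) hAg,
    Submodule.mapsTo_biSup (T := ad ℂ L ⁅u, v⁆) hCg,
    Submodule.mapsTo_biSup (T := ad ℂ L ⁅u, v⁆) hCg, fun hAp hAm hCp => ?_⟩
  have hB := LinearMap.BilinForm.lieInvariant_of_apply_lie_eq hinv
  have := isPerfPair_domRestrict₁₂_iSup (P := (· < 0)) (Q := (· > 0)) hnd hdiag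
    (fun i j hij a ha b hb => halfGrading_apply_eq_zero hg hB hij ha hb)
    (fun _ => neg_pos.mpr) (fun _ => neg_neg_iff_pos.mpr)
  have hA'p := Submodule.mapsTo_biSup (T := ad ℂ L v ∘ₗ ad ℂ L u) hA'g (P := (· > 0))
  have hC_eq : (ad ℂ L ⁅u, v⁆).restrict hCp =
      (ad ℂ L u ∘ₗ ad ℂ L v).restrict hAp - (ad ℂ L v ∘ₗ ad ℂ L u).restrict hA'p := by
    ext z
    exact lie_lie u v (z : L)
  rw [trace_eq_of_isPerfPair_of_adjoint
      (B.domRestrict₁₂ (⨆ k < (0 : ℤ), g k) (⨆ k > (0 : ℤ), g k))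
      (g := (ad ℂ L v ∘ₗ ad ℂ L u).restrict hA'p) fun m p => hB.apply_lie_lie u v m p,
    hC_eq, map_sub, sub_sub_cancel]

/-- Formula (5.12) of Remark 5.1 (Lie algebra case):
`tr_{g₋}((ad u)(ad v)) = tr_{g₊}((ad u)(ad v)) − tr_{g₊}(ad ⁅u,v⁆)`
for `u ∈ g_j`, `v ∈ g_{−j}`, together with the invariance of `g₊` and `g₋` under
`(ad u) ∘ (ad v)` and `ad ⁅u,v⁆`. -/
theorem trace_identity_5_12
    {L : Type*} [LieRing L] [LieAlgebra ℂ L] [FiniteDimensional ℂ L]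
    (B : L →ₗ[ℂ] L →ₗ[ℂ] ℂ)
    (hsymm : ∀ a b, B a b = B b a)
    (hinv : ∀ a b c, B ⁅a, b⁆ c = B a ⁅b, c⁆)
    (hnd : ∀ a, (∀ b, B a b = 0) → a = 0)
    (x : L) (g : ℤ → Submodule ℂ L)
    (hg : ∀ k : ℤ, g k = Module.End.eigenspace (LieAlgebra.ad ℂ L x) ((k : ℂ) / 2))
    (hdiag : (⨆ k : ℤ, g k) = ⊤)
    (gp gm : Submodule ℂ L)
    (hgp : gp = ⨆ k > (0 : ℤ), g k) (hgm : gm = ⨆ k < (0 : ℤ), g k)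
    (k : ℤ) (u v : L) (hu : u ∈ g k) (hv : v ∈ g (-k))
    (A C : L →ₗ[ℂ] L)
    (hA : A = (LieAlgebra.ad ℂ L u) ∘ₗ (LieAlgebra.ad ℂ L v))
    (hC : C = LieAlgebra.ad ℂ L ⁅u, v⁆) :
    (∀ z ∈ gp, A z ∈ gp) ∧ (∀ z ∈ gm, A z ∈ gm) ∧
    (∀ z ∈ gp, C z ∈ gp) ∧ (∀ z ∈ gm, C z ∈ gm) ∧
    ∀ (hAp : ∀ z ∈ gp, A z ∈ gp) (hAm : ∀ z ∈ gm, A z ∈ gm)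
      (hCp : ∀ z ∈ gp, C z ∈ gp),
      LinearMap.trace ℂ gm (A.restrict hAm) =
        LinearMap.trace ℂ gp (A.restrict hAp) -
          LinearMap.trace ℂ gp (C.restrict hCp) :=
  trace_identity_5_12_general B hinv hnd x g hg hdiag gp gm hgp hgm k u v hu hv A C hA hC
end

section
/- Let L be a finite-dimensional Lie algebra over ℂ carrying a nondegenerate symmetric invariant bilinear form B (invariance: B(⁅a,b⁆,c) = B(a,⁅b,c⁆) for all a,b,c ∈ L). Let x ∈ L be such that ad x is diagonalizable with all eigenvalues in ½ℤ; for j ∈ ½ℤ let g_j denote the eigenspace of ad x with eigenvalue j, so that L = ⊕_{j ∈ ½ℤ} g_j. Set g₊ = ⊕_{j > 0} g_j and g₀ the 0-eigenspace. Let j ∈ ½ℤ, u ∈ g_j and v ∈ g_{−j}. Then tr_{g₊}((ad u) ∘ (ad v)) = ½ ( κ(u,v) − tr_{g₀}((ad u) ∘ (ad v)) + tr_{g₊}(ad⁅u,v⁆) ), where κ(u,v) = tr_L((ad u) ∘ (ad v)) is the Killing form of L, and tr_{g₊}, tr_{g₀} denote traces of the restrictions of the indicated operators (which preserve g₊ and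 g₀) to g₊ and g₀ respectively. -/
open LinearMap

/-- For an independent family of submodules, the sups over two disjoint sets of
indices are disjoint submodules. -/
private lemma aux_disjoint_biSup {R M ι : Type*} [Ring R] [AddCommGroup M] [Module R M]
    [DecidableEq ι] {g : ι → Submodule R M} (hind : iSupIndep g)
    (s t : ι → Prop) [DecidablePred s] [DecidablePred t]
    (hst : ∀ i, s i → t i → False) :
    Disjoint (⨆ i, ⨆ _ : s i, g i) (⨆ i, ⨆ _ : t i, g i) := by
  rw [Submodule.disjoint_def]
  intro z hzs hzt
  rw [Submodule.mem_biSup_iff_exists_dfinsupp] at hzs hzt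
  obtain ⟨f, hf⟩ := hzs
  obtain ⟨h, hh⟩ := hzt
  have hfh : f.filter s = h.filter t := hind.dfinsupp_lsum_injective (hf.trans hh.symm)
  have h0 : f.filter s = 0 := by
    ext i
    by_cases hsi : s i
    · have h1 := congrFun (congrArg DFunLike.coe hfh) i
      rw [DFinsupp.filter_apply, DFinsupp.filter_apply] at h1
      have hti : ¬ t i := fun hti => hst i hsi hti
      simp only [hsi, hti, if_true, if_false] at h1
      simp [DFinsupp.filter_apply, hsi, h1]
    · simp [DFinsupp.filter_apply, hsi]
  rw [h0] at hf
  simpa using hf.symm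

/-- Formula (5.13) of Remark 5.1 (Lie algebra case):
`tr_{g₊}((ad u)(ad v)) = ½(κ(u,v) − tr_{g₀}((ad u)(ad v)) + tr_{g₊}(ad ⁅u,v⁆))`
for `u ∈ g_j`, `v ∈ g_{−j}`, where `κ` is the Killing form of `L`. -/
theorem trace_identity_5_13
    {L : Type*} [LieRing L] [LieAlgebra ℂ L] [FiniteDimensional ℂ L]
    (B : L →ₗ[ℂ] L →ₗ[ℂ] ℂ)
    (hsymm : ∀ a b, B a b = B b a)
    (hinv : ∀ a b c, B ⁅a, b⁆ c = B a ⁅b, c⁆)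
    (hnd : ∀ a, (∀ b, B a b = 0) → a = 0)
    (x : L) (g : ℤ → Submodule ℂ L)
    (hg : ∀ k : ℤ, g k = Module.End.eigenspace (LieAlgebra.ad ℂ L x) ((k : ℂ) / 2))
    (hdiag : (⨆ k : ℤ, g k) = ⊤)
    (gp : Submodule ℂ L) (hgp : gp = ⨆ k > (0 : ℤ), g k)
    (k : ℤ) (u v : L) (hu : u ∈ g k) (hv : v ∈ g (-k))
    (A C : L →ₗ[ℂ] L)
    (hA : A = (LieAlgebra.ad ℂ L u) ∘ₗ (LieAlgebra.ad ℂ L v))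
    (hC : C = LieAlgebra.ad ℂ L ⁅u, v⁆) :
    (∀ z ∈ gp, A z ∈ gp) ∧ (∀ z ∈ g 0, A z ∈ g 0) ∧ (∀ z ∈ gp, C z ∈ gp) ∧
    ∀ (hAp : ∀ z ∈ gp, A z ∈ gp) (hA0 : ∀ z ∈ g 0, A z ∈ g 0)
      (hCp : ∀ z ∈ gp, C z ∈ gp),
      LinearMap.trace ℂ gp (A.restrict hAp) =
        (1 / 2 : ℂ) *
          (LinearMap.trace ℂ L A - LinearMap.trace ℂ (g 0) (A.restrict hA0) +
            LinearMap.trace ℂ gp (C.restrict hCp)) := by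
  classical
  -- independence of the family `g`
  have hgind : iSupIndep g := by
    have h1 : g = fun m : ℤ =>
        Module.End.eigenspace (LieAlgebra.ad ℂ L x) ((fun m : ℤ => (m : ℂ) / 2) m) :=
      funext hg
    rw [h1]
    refine (Module.End.eigenspaces_iSupIndep (LieAlgebra.ad ℂ L x)).comp ?_
    intro a b hab
    field_simp at hab
    exact_mod_cast hab
  -- bracket shifts eigenvalues
  have hmap : ∀ (m n : ℤ) (w z : L), w ∈ g m → z ∈ g n → ⁅w, z⁆ ∈ g (m + n) := by
    intro m n w z hw hz
    rw [hg, Module.End.mem_eigenspace_iff, LieAlgebra.ad_apply] at hw hz ⊢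
    rw [leibniz_lie, hw, hz, smul_lie, lie_smul, ← add_smul]
    congr 1
    push_cast
    ring
  set A' : L →ₗ[ℂ] L := (LieAlgebra.ad ℂ L v) ∘ₗ (LieAlgebra.ad ℂ L u) with hA'
  -- eigenspace invariance of A, A', C
  have hAe : ∀ m : ℤ, ∀ z ∈ g m, A z ∈ g m := by
    intro m z hz
    have h2 : ⁅u, ⁅v, z⁆⁆ ∈ g (k + (-k + m)) := hmap _ _ _ _ hu (hmap _ _ _ _ hv hz)
    rw [show k + (-k + m) = m by ring] at h2
    rw [hA]
    simpa [LieAlgebra.ad_apply] using h2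
  have hA'e : ∀ m : ℤ, ∀ z ∈ g m, A' z ∈ g m := by
    intro m z hz
    have h2 : ⁅v, ⁅u, z⁆⁆ ∈ g (-k + (k + m)) := hmap _ _ _ _ hv (hmap _ _ _ _ hu hz)
    rw [show -k + (k + m) = m by ring] at h2
    rw [hA']
    simpa [LieAlgebra.ad_apply] using h2
  have huv0 : ⁅u, v⁆ ∈ g 0 := by
    have := hmap _ _ _ _ hu hv
    rwa [show k + -k = 0 by ring] at this
  have hCe : ∀ m : ℤ, ∀ z ∈ g m, C z ∈ g m := by
    intro m z hz
    have h2 : ⁅⁅u, v⁆, z⁆ ∈ g (0 + m) := hmap _ _ _ _ huv0 hz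
    rw [show (0 : ℤ) + m = m by ring] at h2
    rw [hC]
    simpa [LieAlgebra.ad_apply] using h2
  -- invariance of biSups
  have hbig : ∀ (P : ℤ → Prop) (T : L →ₗ[ℂ] L), (∀ m, ∀ z ∈ g m, T z ∈ g m) →
      ∀ z ∈ (⨆ m, ⨆ _ : P m, g m), T z ∈ (⨆ m, ⨆ _ : P m, g m) := by
    intro P T hT z hz
    have hle : (⨆ m, ⨆ _ : P m, g m) ≤ Submodule.comap T (⨆ m, ⨆ _ : P m, g m) := by
      refine iSup₂_le fun m hm => ?_
      intro w hw
      exact Submodule.mem_comap.mpr (le_iSup₂ (f := fun m (_ : P m) => g m) m hm (hT m w hw))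
    exact hle hz
  have hApr : ∀ z ∈ gp, A z ∈ gp := by
    intro z hz; rw [hgp] at hz ⊢; exact hbig _ A hAe z hz
  have hCpr : ∀ z ∈ gp, C z ∈ gp := by
    intro z hz; rw [hgp] at hz ⊢; exact hbig _ C hCe z hz
  refine ⟨hApr, hAe 0, hCpr, ?_⟩
  intro hAp hA0 hCp
  -- negative part
  set gm : Submodule ℂ L := ⨆ m, ⨆ _ : m < (0 : ℤ), g m with hgm
  have hA'm : ∀ z ∈ gm, A' z ∈ gm := by
    intro z hz; rw [hgm] at hz ⊢; exact hbig _ A' hA'e z hz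
  have hAm : ∀ z ∈ gm, A z ∈ gm := by
    intro z hz; rw [hgm] at hz ⊢; exact hbig _ A hAe z hz
  have hCm : ∀ z ∈ gm, C z ∈ gm := by
    intro z hz; rw [hgm] at hz ⊢; exact hbig _ C hCe z hz
  -- orthogonality relations
  have hskew : ∀ w a b : L, B ⁅w, a⁆ b = - B a ⁅w, b⁆ := by
    intro w a b
    rw [← lie_skew w a, map_neg, LinearMap.neg_apply, hinv a w b]
  have horth : ∀ i j : ℤ, i + j ≠ 0 → ∀ a ∈ g i, ∀ b ∈ g j, B a b = 0 := by
    intro i j hij a ha b hb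
    rw [hg, Module.End.mem_eigenspace_iff, LieAlgebra.ad_apply] at ha hb
    have h1 : B ⁅x, a⁆ b = B x ⁅a, b⁆ := hinv x a b
    have h2 : B a ⁅x, b⁆ = - B x ⁅a, b⁆ := by
      rw [← hinv a x b, ← lie_skew a x, map_neg, LinearMap.neg_apply, hinv x a b]
    have h3 : B ⁅x, a⁆ b + B a ⁅x, b⁆ = 0 := by rw [h1, h2]; ring
    rw [ha, hb] at h3
    simp only [map_smul, LinearMap.smul_apply, smul_eq_mul] at h3
    have h4 : ((i : ℂ) + j) * B a b = 0 := by linear_combination 2 * h3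
    have hij' : ((i : ℂ) + j) ≠ 0 := by
      have : (((i + j : ℤ) : ℂ)) ≠ 0 := Int.cast_ne_zero.mpr hij
      push_cast at this
      exact this
    exact (mul_eq_zero.mp h4).resolve_left hij'
  -- nondegeneracy of the pairing between gm and gp
  have hperp_p : ∀ a ∈ gm, (∀ b ∈ gp, B a b = 0) → a = 0 := by
    intro a ha hab
    apply hnd
    intro c
    have hle : (⊤ : Submodule ℂ L) ≤ LinearMap.ker (B a) := by
      rw [← hdiag]
      refine iSup_le fun j => ?_
      intro c hc
      rw [LinearMap.mem_ker]
      rcases lt_or_ge 0 j with hj | hj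
      · exact hab c (by rw [hgp]; exact le_iSup₂ (f := fun m (_ : m > 0) => g m) j hj hc)
      · have hker : gm ≤ LinearMap.ker (B.flip c) := by
          rw [hgm]
          refine iSup₂_le fun i hi => ?_
          intro a' ha'
          rw [LinearMap.mem_ker, LinearMap.flip_apply]
          exact horth i j (by omega) a' ha' c hc
        simpa using hker ha
    exact hle Submodule.mem_top
  have hperp_m : ∀ b ∈ gp, (∀ a ∈ gm, B a b = 0) → b = 0 := by
    intro b hb hab
    apply hnd
    intro c
    have hle : (⊤ : Submodule ℂ L) ≤ LinearMap.ker (B b) := by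
      rw [← hdiag]
      refine iSup_le fun j => ?_
      intro c hc
      rw [LinearMap.mem_ker]
      rcases lt_or_ge j 0 with hj | hj
      · rw [hsymm]
        exact hab c (by rw [hgm]; exact le_iSup₂ (f := fun m (_ : m < 0) => g m) j hj hc)
      · have hker : gp ≤ LinearMap.ker (B.flip c) := by
          rw [hgp]
          refine iSup₂_le fun i hi => ?_
          intro b' hb'
          rw [LinearMap.mem_ker, LinearMap.flip_apply]
          exact horth i j (by omega) b' hb' c hc
        simpa using hker hb
    exact hle Submodule.mem_top
  -- the trace-transfer lemma via the duality pairing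
  have htr : ∀ (T S : L →ₗ[ℂ] L) (hT : ∀ z ∈ gm, T z ∈ gm) (hS : ∀ z ∈ gp, S z ∈ gp),
      (∀ a b : L, B (T a) b = B a (S b)) →
      LinearMap.trace ℂ gm (T.restrict hT) = LinearMap.trace ℂ gp (S.restrict hS) := by
    intro T S hT hS hadj
    set e₀ : gm →ₗ[ℂ] Module.Dual ℂ gp := (B.compl₂ gp.subtype).domRestrict gm with he₀
    set e₁ : gp →ₗ[ℂ] Module.Dual ℂ gm := (B.compl₂ gm.subtype).domRestrict gp with he₁
    have hinj₀ : Function.Injective e₀ := by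
      rw [← LinearMap.ker_eq_bot, LinearMap.ker_eq_bot']
      intro a ha
      have : (a : L) = 0 := by
        refine hperp_p a a.2 fun b hb => ?_
        have := congrFun (congrArg DFunLike.coe ha) ⟨b, hb⟩
        simpa [he₀] using this
      exact Subtype.ext this
    have hinj₁ : Function.Injective e₁ := by
      rw [← LinearMap.ker_eq_bot, LinearMap.ker_eq_bot']
      intro b hb
      have : (b : L) = 0 := by
        refine hperp_m b b.2 fun a ha => ?_
        have := congrFun (congrArg DFunLike.coe hb) ⟨a, ha⟩
        rw [hsymm]
        simpa [he₁] using this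
      exact Subtype.ext this
    have hdim : Module.finrank ℂ gm = Module.finrank ℂ (Module.Dual ℂ gp) := by
      rw [Subspace.dual_finrank_eq]
      refine le_antisymm ?_ ?_
      · have := LinearMap.finrank_le_finrank_of_injective hinj₀
        rwa [Subspace.dual_finrank_eq] at this
      · have := LinearMap.finrank_le_finrank_of_injective hinj₁
        rwa [Subspace.dual_finrank_eq] at this
    set E : gm ≃ₗ[ℂ] Module.Dual ℂ gp := e₀.linearEquivOfInjective hinj₀ hdim with hE
    have hEapp : ∀ a : gm, E a = e₀ a := fun a =>
      e₀.linearEquivOfInjective_apply hinj₀ hdim a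
    have hconj : E.conj (T.restrict hT) = (S.restrict hS).dualMap := by
      apply LinearMap.ext
      intro φ
      obtain ⟨a, rfl⟩ := E.surjective φ
      rw [LinearEquiv.conj_apply]
      apply LinearMap.ext
      intro b
      simp only [LinearMap.coe_comp, Function.comp_apply, LinearEquiv.coe_coe,
        LinearEquiv.symm_apply_apply, LinearMap.dualMap_apply]
      simp only [hEapp]
      have h5 : (e₀ (T.restrict hT a)) b = B (T a) b := rfl
      have h6 : (e₀ a) ((S.restrict hS) b) = B (a : L) (S b) := rfl
      rw [h5, h6, hadj]
    calc LinearMap.trace ℂ gm (T.restrict hT)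
        = LinearMap.trace ℂ (Module.Dual ℂ gp) (E.conj (T.restrict hT)) :=
          (LinearMap.trace_conj' (T.restrict hT) E).symm
      _ = LinearMap.trace ℂ (Module.Dual ℂ gp) ((S.restrict hS).dualMap) := by rw [hconj]
      _ = LinearMap.trace ℂ gp (S.restrict hS) := by
          rw [LinearMap.dualMap_def, LinearMap.trace_transpose']
  -- the three-block decomposition
  set N : Fin 3 → Submodule ℂ L := ![gm, g 0, gp] with hN
  have hN0 : N 0 = gm := rfl
  have hN1 : N 1 = g 0 := rfl
  have hN2 : N 2 = gp := rfl
  have hg0eq : g 0 = ⨆ m, ⨆ _ : m = (0 : ℤ), g m := by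
    refine le_antisymm (le_iSup₂ (f := fun m (_ : m = (0:ℤ)) => g m) 0 rfl)
      (iSup₂_le fun m hm => by rw [hm])
  have hindN : iSupIndep N := by
    intro i
    fin_cases i
    · have hle : (⨆ j, ⨆ _ : j ≠ (0 : Fin 3), N j) ≤ ⨆ m, ⨆ _ : (0:ℤ) ≤ m, g m := by
        refine iSup₂_le fun j hj => ?_
        fin_cases j
        · simp at hj
        · show g 0 ≤ ⨆ m, ⨆ _ : (0:ℤ) ≤ m, g m
          rw [hg0eq]
          exact iSup₂_le fun m hm => le_iSup₂ (f := fun m (_ : (0:ℤ) ≤ m) => g m) m (le_of_eq hm.symm)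
        · show gp ≤ ⨆ m, ⨆ _ : (0:ℤ) ≤ m, g m
          rw [hgp]
          exact iSup₂_le fun m hm => le_iSup₂ (f := fun m (_ : (0:ℤ) ≤ m) => g m) m (le_of_lt hm)
      have hd : Disjoint gm (⨆ m, ⨆ _ : (0:ℤ) ≤ m, g m) := by
        rw [hgm]
        exact aux_disjoint_biSup hgind _ _ (fun m h1 h2 => absurd h2 (not_le.mpr h1))
      exact Disjoint.mono_right hle hd
    · have hle : (⨆ j, ⨆ _ : j ≠ (1 : Fin 3), N j) ≤ ⨆ m, ⨆ _ : m ≠ (0:ℤ), g m := by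
        refine iSup₂_le fun j hj => ?_
        fin_cases j
        · show gm ≤ ⨆ m, ⨆ _ : m ≠ (0:ℤ), g m
          rw [hgm]
          exact iSup₂_le fun m hm => le_iSup₂ (f := fun m (_ : m ≠ (0:ℤ)) => g m) m (by omega)
        · simp at hj
        · show gp ≤ ⨆ m, ⨆ _ : m ≠ (0:ℤ), g m
          rw [hgp]
          exact iSup₂_le fun m hm => le_iSup₂ (f := fun m (_ : m ≠ (0:ℤ)) => g m) m (by omega)
      have hd : Disjoint (g 0) (⨆ m, ⨆ _ : m ≠ (0:ℤ), g m) := by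
        rw [hg0eq]
        exact aux_disjoint_biSup hgind _ _ (fun m h1 h2 => absurd h1 h2)
      exact Disjoint.mono_right hle hd
    · have hle : (⨆ j, ⨆ _ : j ≠ (2 : Fin 3), N j) ≤ ⨆ m, ⨆ _ : m ≤ (0:ℤ), g m := by
        refine iSup₂_le fun j hj => ?_
        fin_cases j
        · show gm ≤ ⨆ m, ⨆ _ : m ≤ (0:ℤ), g m
          rw [hgm]
          exact iSup₂_le fun m hm => le_iSup₂ (f := fun m (_ : m ≤ (0:ℤ)) => g m) m (le_of_lt hm)
        · show g 0 ≤ ⨆ m, ⨆ _ : m ≤ (0:ℤ), g m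
          rw [hg0eq]
          exact iSup₂_le fun m hm => le_iSup₂ (f := fun m (_ : m ≤ (0:ℤ)) => g m) m (le_of_eq hm)
        · simp at hj
      have hd : Disjoint gp (⨆ m, ⨆ _ : m ≤ (0:ℤ), g m) := by
        rw [hgp]
        exact aux_disjoint_biSup hgind _ _ (fun m h1 h2 => absurd h2 (not_le.mpr h1))
      exact Disjoint.mono_right hle hd
  have hsupN : ⨆ i, N i = ⊤ := by
    refine le_antisymm le_top ?_
    rw [← hdiag]
    refine iSup_le fun m => ?_
    rcases lt_trichotomy m 0 with hm | hm | hm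
    · calc g m ≤ N 0 := by
            rw [hN0, hgm]; exact le_iSup₂ (f := fun m (_ : m < (0:ℤ)) => g m) m hm
        _ ≤ ⨆ i, N i := le_iSup N 0
    · calc g m ≤ N 1 := by rw [hN1, hm]
        _ ≤ ⨆ i, N i := le_iSup N 1
    · calc g m ≤ N 2 := by
            rw [hN2, hgp]; exact le_iSup₂ (f := fun m (_ : m > (0:ℤ)) => g m) m hm
        _ ≤ ⨆ i, N i := le_iSup N 2
  have hInternal : DirectSum.IsInternal N :=
    DirectSum.isInternal_submodule_of_iSupIndep_of_iSup_eq_top hindN hsupN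
  have hmapsA : ∀ i, Set.MapsTo A (N i) (N i) := by
    intro i
    fin_cases i
    · exact fun z hz => hAm z hz
    · exact fun z hz => hA0 z hz
    · exact fun z hz => hAp z hz
  have h1 : LinearMap.trace ℂ L A =
      LinearMap.trace ℂ gm (A.restrict hAm) + LinearMap.trace ℂ (g 0) (A.restrict hA0) +
        LinearMap.trace ℂ gp (A.restrict hAp) := by
    rw [LinearMap.trace_eq_sum_trace_restrict hInternal hmapsA, Fin.sum_univ_three]
    rfl
  -- split A = A' + C on gm
  have hAsplit : A = A' + C := by
    ext z
    rw [hA, hA', hC]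
    simp only [LinearMap.coe_comp, Function.comp_apply, LieAlgebra.ad_apply, LinearMap.add_apply]
    rw [lie_lie]
    abel
  have h2 : LinearMap.trace ℂ gm (A.restrict hAm) =
      LinearMap.trace ℂ gm (A'.restrict hA'm) + LinearMap.trace ℂ gm (C.restrict hCm) := by
    have hres : A.restrict hAm = A'.restrict hA'm + C.restrict hCm := by
      apply LinearMap.ext
      intro z
      apply Subtype.ext
      simp [LinearMap.restrict_apply, hAsplit]
    rw [hres, map_add]
  have h3 : LinearMap.trace ℂ gm (A'.restrict hA'm) = LinearMap.trace ℂ gp (A.restrict hAp) := by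
    refine htr A' A hA'm hAp ?_
    intro a b
    rw [hA', hA]
    simp only [LinearMap.coe_comp, Function.comp_apply, LieAlgebra.ad_apply]
    rw [hskew, hskew, neg_neg]
  have hnegCp : ∀ z ∈ gp, (-C) z ∈ gp := by
    intro z hz
    simpa using gp.neg_mem (hCp z hz)
  have h4 : LinearMap.trace ℂ gm (C.restrict hCm) = - LinearMap.trace ℂ gp (C.restrict hCp) := by
    have h5 : LinearMap.trace ℂ gm (C.restrict hCm) =
        LinearMap.trace ℂ gp ((-C).restrict hnegCp) := by
      refine htr C (-C) hCm hnegCp ?_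
      intro a b
      rw [hC]
      simp only [LinearMap.neg_apply, map_neg, LieAlgebra.ad_apply]
      rw [hskew]
    have h6 : (-C).restrict hnegCp = - (C.restrict hCp) := by
      apply LinearMap.ext
      intro z
      apply Subtype.ext
      simp [LinearMap.restrict_apply]
    rw [h5, h6, map_neg]
  rw [h2, h3, h4] at h1
  rw [h1]
  ring
end

section
/- Let L be a finite-dimensional Lie algebra over ℂ carrying a nondegenerate symmetric invariant bilinear form B (invariance: B(⁅a,b⁆,c) = B(a,⁅b,c⁆) for all a,b,c ∈ L). Let x ∈ L be such that ad x is diagonalizable with all eigenvalues in ½ℤ; for j ∈ ½ℤ let g_j denote the eigenspace of ad x with eigenvalue j, so that L = ⊕_{j ∈ ½ℤ} g_j. Let f ∈ g_{−1} and define the bilinear form ⟨·,·⟩ on g_{1/2} by ⟨a,b⟩ = B(f, ⁅a,b⁆). Then ⟨·,·⟩ is nondegenerate on g_{1/2} if and only if ad f restricts to a linear bijection from g_{1/2} onto g_{−1/2}. -/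
/-!
An invariant form pairs the `μ`- and `ν`-eigenspaces of `ad x` trivially unless `μ + ν = 0`; as the
eigenspaces span `L`, the form therefore pairs `g_{-1/2}` perfectly with `g_{1/2}`. In particular
these two spaces have the same dimension, and since `⟨a, b⟩ = B ⁅f, a⁆ b` with `⁅f, a⁆ ∈ g_{-1/2}`,
the kernel of `⟨·,·⟩` is the kernel of `ad f` on `g_{1/2}`. So nondegeneracy is injectivity of
`ad f : g_{1/2} → g_{-1/2}`, which by the dimension count is bijectivity.
-/

open Module Module.End LieAlgebra

lemma Submodule.map_eq_of_injOn_of_finrank_eq {K V W : Type*} [Field K] [AddCommGroup V]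
    [Module K V] [AddCommGroup W] [Module K W] (φ : V →ₗ[K] W) {U : Submodule K V}
    {U' : Submodule K W} [FiniteDimensional K U'] (hmaps : ∀ a ∈ U, φ a ∈ U')
    (hinj : ∀ a ∈ U, φ a = 0 → a = 0) (hdim : finrank K U = finrank K U') :
    U.map φ = U' := by
  have hinj' : Function.Injective (φ.comp U.subtype) := by
    rw [← LinearMap.ker_eq_bot, LinearMap.ker_eq_bot']
    exact fun a ha => Subtype.ext (hinj a a.2 ha)
  refine Submodule.eq_of_le_of_finrank_eq (Submodule.map_le_iff_le_comap.2 hmaps) ?_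
  rw [← hdim, ← LinearMap.finrank_range_of_inj hinj', LinearMap.range_comp,
    Submodule.range_subtype]

namespace LieAlgebra

variable {K L : Type*} [Field K] [LieRing L] [LieAlgebra K L] (x : L) {μ ν : K} {a b : L}

lemma lie_mem_eigenspace_ad (ha : a ∈ eigenspace (ad K L x) μ)
    (hb : b ∈ eigenspace (ad K L x) ν) : ⁅a, b⁆ ∈ eigenspace (ad K L x) (μ + ν) := by
  rw [mem_eigenspace_iff, ad_apply] at *
  rw [leibniz_lie, ha, hb, smul_lie, lie_smul, add_smul]

variable (B : L →ₗ[K] L →ₗ[K] K)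

lemma apply_eq_zero_of_mem_eigenspace_ad (hinv : ∀ a b c, B ⁅a, b⁆ c = B a ⁅b, c⁆)
    (hμν : μ + ν ≠ 0) (ha : a ∈ eigenspace (ad K L x) μ) (hb : b ∈ eigenspace (ad K L x) ν) :
    B a b = 0 := by
  have h := hinv a x b
  rw [mem_eigenspace_iff, ad_apply] at ha hb
  rw [← lie_skew, ha, hb] at h
  simp only [map_neg, map_smul, LinearMap.neg_apply, LinearMap.smul_apply, smul_eq_mul] at h
  exact (mul_eq_zero.1 (by linear_combination -h : (μ + ν) * B a b = 0)).resolve_left hμν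

lemma eq_zero_of_forall_mem_eigenspace_ad_neg (hinv : ∀ a b c, B ⁅a, b⁆ c = B a ⁅b, c⁆)
    (hnd : ∀ a, (∀ b, B a b = 0) → a = 0) (hspan : ⨆ μ, eigenspace (ad K L x) μ = ⊤)
    (ha : a ∈ eigenspace (ad K L x) μ) (h : ∀ b ∈ eigenspace (ad K L x) (-μ), B a b = 0) :
    a = 0 := by
  refine hnd a fun c => ?_
  have hker : ⨆ ν, eigenspace (ad K L x) ν ≤ LinearMap.ker (B a) := by
    refine iSup_le fun ν b hb => ?_
    rcases eq_or_ne ν (-μ) with rfl | hν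
    · exact h b hb
    · exact apply_eq_zero_of_mem_eigenspace_ad x B hinv
        (fun h => hν (eq_neg_of_add_eq_zero_right h)) ha hb
  exact hker (hspan ▸ Submodule.mem_top)

lemma finrank_eigenspace_ad_le_neg [FiniteDimensional K L]
    (hinv : ∀ a b c, B ⁅a, b⁆ c = B a ⁅b, c⁆) (hnd : ∀ a, (∀ b, B a b = 0) → a = 0)
    (hspan : ⨆ μ, eigenspace (ad K L x) μ = ⊤) :
    finrank K (eigenspace (ad K L x) μ) ≤ finrank K (eigenspace (ad K L x) (-μ)) := by
  have hinj : Function.Injective (B.domRestrict₁₂ (eigenspace (ad K L x) μ)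
      (eigenspace (ad K L x) (-μ))) := by
    rw [← LinearMap.ker_eq_bot, LinearMap.ker_eq_bot']
    exact fun a ha => Subtype.ext (eq_zero_of_forall_mem_eigenspace_ad_neg x B hinv hnd hspan
      a.2 fun b hb => LinearMap.congr_fun ha ⟨b, hb⟩)
  exact (LinearMap.finrank_le_finrank_of_injective hinj).trans_eq Subspace.dual_finrank_eq

lemma finrank_eigenspace_ad_neg [FiniteDimensional K L]
    (hinv : ∀ a b c, B ⁅a, b⁆ c = B a ⁅b, c⁆) (hnd : ∀ a, (∀ b, B a b = 0) → a = 0)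
    (hspan : ⨆ μ, eigenspace (ad K L x) μ = ⊤) :
    finrank K (eigenspace (ad K L x) μ) = finrank K (eigenspace (ad K L x) (-μ)) := by
  refine (finrank_eigenspace_ad_le_neg x B hinv hnd hspan).antisymm ?_
  have h := finrank_eigenspace_ad_le_neg (μ := -μ) x B hinv hnd hspan
  rwa [neg_neg] at h

lemma forall_apply_lie_eq_zero_iff (hinv : ∀ a b c, B ⁅a, b⁆ c = B a ⁅b, c⁆)
    (hnd : ∀ a, (∀ b, B a b = 0) → a = 0) (hspan : ⨆ μ, eigenspace (ad K L x) μ = ⊤) (f : L)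
    (hfa : ⁅f, a⁆ ∈ eigenspace (ad K L x) (-μ)) :
    (∀ b ∈ eigenspace (ad K L x) μ, B f ⁅a, b⁆ = 0) ↔ ⁅f, a⁆ = 0 := by
  simp_rw [← hinv f a]
  refine ⟨fun h => eq_zero_of_forall_mem_eigenspace_ad_neg x B hinv hnd hspan hfa ?_, ?_⟩
  · simpa using h
  · rintro h b -
    rw [h, map_zero, LinearMap.zero_apply]

end LieAlgebra

theorem neutral_form_nondeg_iff_general
    {L : Type*} [LieRing L] [LieAlgebra ℂ L] [FiniteDimensional ℂ L]
    (B : L →ₗ[ℂ] L →ₗ[ℂ] ℂ)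
    (hinv : ∀ a b c, B ⁅a, b⁆ c = B a ⁅b, c⁆)
    (hnd : ∀ a, (∀ b, B a b = 0) → a = 0)
    (x : L) (g : ℤ → Submodule ℂ L)
    (hg : ∀ k : ℤ, g k = Module.End.eigenspace (LieAlgebra.ad ℂ L x) ((k : ℂ) / 2))
    (hdiag : (⨆ k : ℤ, g k) = ⊤)
    (f : L) (hf : f ∈ g (-2)) :
    (∀ a ∈ g 1, (∀ b ∈ g 1, B f ⁅a, b⁆ = 0) → a = 0) ↔
      (Submodule.map (LieAlgebra.ad ℂ L f) (g 1) = g (-1) ∧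
        ∀ a ∈ g 1, ⁅f, a⁆ = 0 → a = 0) := by
  have hspan : ⨆ μ, eigenspace (ad ℂ L x) μ = ⊤ := by
    rw [eq_top_iff, ← hdiag]
    exact iSup_le fun k => hg k ▸ le_iSup _ _
  have hf' : f ∈ eigenspace (ad ℂ L x) (-1) := by simpa [hg] using hf
  rw [show g 1 = eigenspace (ad ℂ L x) (1 / 2) by simp [hg],
    show g (-1) = eigenspace (ad ℂ L x) (-(1 / 2)) by simp [hg, neg_div]]
  have hmaps : ∀ a ∈ eigenspace (ad ℂ L x) (1 / 2), ⁅f, a⁆ ∈ eigenspace (ad ℂ L x) (-(1 / 2)) :=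
    fun a ha => by
      have h := lie_mem_eigenspace_ad x hf' ha
      rwa [show (-1 : ℂ) + 1 / 2 = -(1 / 2) by norm_num] at h
  have hker : ∀ a ∈ eigenspace (ad ℂ L x) (1 / 2),
      (∀ b ∈ eigenspace (ad ℂ L x) (1 / 2), B f ⁅a, b⁆ = 0) ↔ ⁅f, a⁆ = 0 := fun a ha =>
    forall_apply_lie_eq_zero_iff x B hinv hnd hspan f (hmaps a ha)
  constructor
  · intro hnondeg
    have hinj : ∀ a ∈ eigenspace (ad ℂ L x) (1 / 2), ⁅f, a⁆ = 0 → a = 0 :=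
      fun a ha h => hnondeg a ha ((hker a ha).2 h)
    exact ⟨Submodule.map_eq_of_injOn_of_finrank_eq _ hmaps hinj
      (finrank_eigenspace_ad_neg x B hinv hnd hspan), hinj⟩
  · rintro ⟨-, hinj⟩ a ha h
    exact hinj a ha ((hker a ha).1 h)

/-- Equivalence of the nondegeneracy of the form `⟨a,b⟩ = B(f,⁅a,b⁆)` on `g_{1/2}`
with condition (1.4): `ad f : g_{1/2} → g_{−1/2}` is a bijection. -/
theorem neutral_form_nondeg_iff
    {L : Type*} [LieRing L] [LieAlgebra ℂ L] [FiniteDimensional ℂ L]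
    (B : L →ₗ[ℂ] L →ₗ[ℂ] ℂ)
    (hsymm : ∀ a b, B a b = B b a)
    (hinv : ∀ a b c, B ⁅a, b⁆ c = B a ⁅b, c⁆)
    (hnd : ∀ a, (∀ b, B a b = 0) → a = 0)
    (x : L) (g : ℤ → Submodule ℂ L)
    (hg : ∀ k : ℤ, g k = Module.End.eigenspace (LieAlgebra.ad ℂ L x) ((k : ℂ) / 2))
    (hdiag : (⨆ k : ℤ, g k) = ⊤)
    (f : L) (hf : f ∈ g (-2)) :
    (∀ a ∈ g 1, (∀ b ∈ g 1, B f ⁅a, b⁆ = 0) → a = 0) ↔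
      (Submodule.map (LieAlgebra.ad ℂ L f) (g 1) = g (-1) ∧
        ∀ a ∈ g 1, ⁅f, a⁆ = 0 → a = 0) :=
  neutral_form_nondeg_iff_general B hinv hnd x g hg hdiag f hf
end

section
/- Let L be a finite-dimensional Lie algebra over ℂ carrying a nondegenerate symmetric invariant bilinear form B (invariance: B(⁅a,b⁆,c) = B(a,⁅b,c⁆) for all a,b,c ∈ L). Let x ∈ L be such that ad x is diagonalizable with all eigenvalues in ½ℤ; for j ∈ ½ℤ let g_j denote the eigenspace of ad x with eigenvalue j, so that L = ⊕_{j ∈ ½ℤ} g_j. Let f ∈ g_{−1} and suppose (x,f) is a good pair, i.e. the centralizer L^f = {a ∈ L : ⁅f,a⁆ = 0} is contained in ⊕_{j ≤ 0} g_j. Then dim L^f = dim g₀ + dim g_{1/2}. -/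
/-!
Grade by twice the `ad x`-eigenvalue. Then `F = ad f` lowers the degree by 2 and is skew-adjoint
for `B`, and `B` pairs `g i` with `g j` only when `i + j = 0`. Put `Q = ⊕_{k ≤ 0} g k` and `T = ⊕_{k ≤ -2} g k`. Goodness says `ker F ≤ Q`, hence
`T ≤ Qᗮ ≤ (ker F)ᗮ = range F`. Since `F` maps the complement `⊕_{k > 0} g k` of `Q` into
`⊕_{k > -2} g k`, which meets `T` trivially, in fact `F Q = T`. Rank–nullity on `Q` gives
`dim ker F = dim Q - dim T = dim g 0 + dim g (-1)`, and `dim g (-1) = dim g 1` because `B` pairs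
these two eigenspaces perfectly.
-/

open Module LinearMap

namespace Submodule

variable {R M N : Type*} [Ring R] [AddCommGroup M] [Module R M] [AddCommGroup N] [Module R N]

theorem map_biSup_le_of_map_le {ι : Type*} {p : ι → Submodule R M} {q : ι → Submodule R N}
    (F : M →ₗ[R] N) (e : ι → ι) (hF : ∀ k, (p k).map F ≤ q (e k)) {s t : Set ι}
    (hst : ∀ k ∈ s, e k ∈ t) : (⨆ k ∈ s, p k).map F ≤ ⨆ k ∈ t, q k := by
  simp only [map_iSup]
  exact iSup₂_le fun k hk => (hF k).trans (le_biSup q (hst k hk))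

theorem map_eq_of_le_range {F : M →ₗ[R] N} {P Q : Submodule R M} {S T : Submodule R N}
    (hPQ : P ⊔ Q = ⊤) (hP : P.map F ≤ S) (hQ : Q.map F ≤ T) (hST : Disjoint S T)
    (hT : T ≤ range F) : Q.map F = T := by
  refine le_antisymm hQ fun t ht => ?_
  rw [← map_top, ← hPQ, map_sup] at hT
  obtain ⟨s, hs, q, hq, rfl⟩ := mem_sup.mp (hT ht)
  have hs0 : s = 0 := disjoint_def.mp hST s (hP hs) (by simpa using T.sub_mem ht (hQ hq))
  simpa [hs0] using hq

end Submodule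

namespace Submodule

variable {K V W : Type*} [DivisionRing K] [AddCommGroup V] [Module K V] [AddCommGroup W]
  [Module K W] [FiniteDimensional K V]

theorem finrank_ker_add_finrank_map_of_ker_le (F : V →ₗ[K] W) {Q : Submodule K V}
    (hQ : ker F ≤ Q) : finrank K (ker F) + finrank K (Q.map F) = finrank K Q := by
  have := (F.domRestrict Q).finrank_range_add_finrank_ker
  rw [LinearMap.range_domRestrict, ker_domRestrict, (comapSubtypeEquivOfLe hQ).finrank_eq] at this
  omega

theorem finrank_sup_of_disjoint {A C : Submodule K V} (h : Disjoint A C) :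
    finrank K ↥(A ⊔ C) = finrank K A + finrank K C := by
  have := finrank_sup_add_finrank_inf_eq A C
  rw [h.eq_bot, finrank_bot, add_zero] at this
  exact this

theorem finrank_biSup_insert {ι : Type*} {p : ι → Submodule K V} (hp : iSupIndep p) {i : ι}
    {s : Set ι} (hi : i ∉ s) :
    finrank K ↥(⨆ k ∈ insert i s, p k) = finrank K (p i) + finrank K ↥(⨆ k ∈ s, p k) := by
  rw [iSup_insert]
  exact finrank_sup_of_disjoint (hp.disjoint_biSup hi)

end Submodule

namespace LinearMap.BilinForm

variable {K V : Type*} [Field K] [AddCommGroup V] [Module K V] {B : LinearMap.BilinForm K V}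
  {φ : Module.End K V}

theorem biSup_le_orthogonal_biSup {ι : Type*} {p : ι → Submodule K V} {s t : Set ι}
    (h : ∀ i ∈ s, ∀ j ∈ t, p j ≤ B.orthogonal (p i)) :
    ⨆ j ∈ t, p j ≤ B.orthogonal (⨆ i ∈ s, p i) :=
  iSup₂_le fun j hj b hb =>
    (iSup₂_le fun i hi a ha => h i hi j hj hb a ha : ⨆ i ∈ s, p i ≤ ker (B.flip b))

theorem eigenspace_le_orthogonal_eigenspace (hφ : ∀ a b, B (φ a) b = -B a (φ b)) {μ ν : K}
    (hμν : μ + ν ≠ 0) : φ.eigenspace ν ≤ B.orthogonal (φ.eigenspace μ) := by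
  intro b hb a ha
  rw [Module.End.mem_eigenspace_iff] at ha hb
  have h := hφ a b
  rw [ha, hb, map_smul, smul_apply, map_smul, smul_eq_mul, smul_eq_mul] at h
  exact (mul_eq_zero.mp (by linear_combination h : (μ + ν) * B a b = 0)).resolve_left hμν

theorem orthogonal_range_le_ker (hB : B.SeparatingRight) (hφ : ∀ a b, B (φ a) b = -B a (φ b)) :
    B.orthogonal (range φ) ≤ ker φ := fun c hc =>
  hB _ fun b => by rw [← neg_eq_zero, ← hφ]; exact hc _ (mem_range_self φ b)

theorem orthogonal_ker_le_range [FiniteDimensional K V] (hB : B.Nondegenerate) (hB₀ : B.IsRefl)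
    (hφ : ∀ a b, B (φ a) b = -B a (φ b)) : B.orthogonal (ker φ) ≤ range φ := by
  simpa only [orthogonal_orthogonal hB hB₀] using
    orthogonal_le (B := B) (orthogonal_range_le_ker hB.2 hφ)

theorem finrank_eigenspace_neg [FiniteDimensional K V] (hB : B.SeparatingLeft)
    (hφ : ∀ a b, B (φ a) b = -B a (φ b)) (hdiag : ⨆ ν, φ.eigenspace ν = ⊤) (μ : K) :
    finrank K (φ.eigenspace (-μ)) = finrank K (φ.eigenspace μ) := by
  have hle (μ : K) : finrank K (φ.eigenspace μ) ≤ finrank K (φ.eigenspace (-μ)) := by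
    have hinj : Function.Injective (B.domRestrict₁₂ (φ.eigenspace μ) (φ.eigenspace (-μ))) := by
      refine (injective_iff_map_eq_zero _).mpr fun a ha => Subtype.ext <| hB a fun b => ?_
      have hle : ⨆ ν, φ.eigenspace ν ≤ ker (B a) := iSup_le fun ν c hc => by
        by_cases hν : ν = -μ
        · subst hν
          exact congr($ha ⟨c, hc⟩)
        · exact eigenspace_le_orthogonal_eigenspace hφ
            (fun h => hν (eq_neg_of_add_eq_zero_right h)) hc a a.2
      exact hle (hdiag ▸ Submodule.mem_top)
    calc finrank K (φ.eigenspace μ) ≤ finrank K (Dual K (φ.eigenspace (-μ))) :=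
          finrank_le_finrank_of_injective hinj
      _ = finrank K (φ.eigenspace (-μ)) := Subspace.dual_finrank_eq
  have h := hle (-μ)
  rw [neg_neg] at h
  exact le_antisymm h (hle μ)

open Submodule in
theorem finrank_ker_eq_of_ker_le_biSup_Iic [FiniteDimensional K V] (hB : B.Nondegenerate)
    (hB₀ : B.IsRefl) {g : ℤ → Submodule K V} (hindep : iSupIndep g) (hdiag : ⨆ k, g k = ⊤)
    (horth : ∀ i j, i + j ≠ 0 → g j ≤ B.orthogonal (g i)) (hφ : ∀ a b, B (φ a) b = -B a (φ b))
    (hshift : ∀ k, (g k).map φ ≤ g (k - 2)) (hker : ker φ ≤ ⨆ k ∈ Set.Iic 0, g k) :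
    finrank K (ker φ) = finrank K (g 0) + finrank K (g (-1)) := by
  have hrange : ⨆ k ∈ Set.Iic (-2), g k ≤ range φ := by
    refine (biSup_le_orthogonal_biSup fun i hi j hj => horth i j ?_).trans
      ((orthogonal_le hker).trans (orthogonal_ker_le_range hB hB₀ hφ))
    rw [Set.mem_Iic] at hi hj
    omega
  have hmap : (⨆ k ∈ Set.Iic 0, g k).map φ = ⨆ k ∈ Set.Iic (-2), g k := by
    refine map_eq_of_le_range (P := ⨆ k ∈ Set.Ioi 0, g k) (S := ⨆ k ∈ Set.Ioi (-2), g k) ?_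
      (map_biSup_le_of_map_le φ _ hshift ?_) (map_biSup_le_of_map_le φ _ hshift ?_)
      (hindep.disjoint_biSup_biSup (Set.Iic_disjoint_Ioi le_rfl).symm) hrange
    · rw [← iSup_union, Set.union_comm, Set.Iic_union_Ioi, iSup_univ, hdiag]
    all_goals intro k hk; simp only [Set.mem_Ioi, Set.mem_Iic] at hk ⊢; omega
  have hrank := finrank_ker_add_finrank_map_of_ker_le φ hker
  rw [hmap, show Set.Iic (0 : ℤ) = insert 0 (insert (-1) (Set.Iic (-2))) by ext; simp; omega,
    finrank_biSup_insert hindep (by simp), finrank_biSup_insert hindep (by simp)] at hrank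
  omega

end LinearMap.BilinForm

namespace LieAlgebra

variable {R L : Type*} [CommRing R] [LieRing L] [LieAlgebra R L]

theorem lie_mem_eigenspace_ad_add {x a b : L} {μ ν : R} (ha : a ∈ (ad R L x).eigenspace μ)
    (hb : b ∈ (ad R L x).eigenspace ν) : ⁅a, b⁆ ∈ (ad R L x).eigenspace (μ + ν) := by
  rw [Module.End.mem_eigenspace_iff, ad_apply] at ha hb ⊢
  rw [leibniz_lie, ha, hb, smul_lie, lie_smul, add_smul]

end LieAlgebra

theorem LinearMap.BilinForm.lieInvariant_of_apply_lie_apply {R L : Type*} [CommRing R] [LieRing L]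
    [LieAlgebra R L] {B : LinearMap.BilinForm R L} (hB : ∀ a b c, B ⁅a, b⁆ c = B a ⁅b, c⁆) :
    B.lieInvariant L := fun y a b => by
  rw [← hB, ← lie_skew, map_neg, LinearMap.neg_apply]

open LieAlgebra LinearMap.BilinForm in
/-- The isomorphism (1.12) at the level of dimensions: for a good pair `(x,f)`,
`dim L^f = dim g₀ + dim g_{1/2}`. -/
theorem good_pair_centralizer_dim
    {L : Type*} [LieRing L] [LieAlgebra ℂ L] [FiniteDimensional ℂ L]
    (B : L →ₗ[ℂ] L →ₗ[ℂ] ℂ)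
    (hsymm : ∀ a b, B a b = B b a)
    (hinv : ∀ a b c, B ⁅a, b⁆ c = B a ⁅b, c⁆)
    (hnd : ∀ a, (∀ b, B a b = 0) → a = 0)
    (x : L) (g : ℤ → Submodule ℂ L)
    (hg : ∀ k : ℤ, g k = Module.End.eigenspace (LieAlgebra.ad ℂ L x) ((k : ℂ) / 2))
    (hdiag : (⨆ k : ℤ, g k) = ⊤)
    (f : L) (hf : f ∈ g (-2))
    (hgood : ∀ a : L, ⁅f, a⁆ = 0 → a ∈ ⨆ k ≤ (0 : ℤ), g k) :
    Module.finrank ℂ (LinearMap.ker (LieAlgebra.ad ℂ L f)) =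
      Module.finrank ℂ (g 0) + Module.finrank ℂ (g 1) := by
  have hB₀ : B.IsRefl := fun a b h => (hsymm b a).trans h
  have hB : B.Nondegenerate := hB₀.nondegenerate_iff_separatingLeft.mpr hnd
  have hskew (y : L) : ∀ a b, B (ad ℂ L y a) b = -B a (ad ℂ L y b) :=
    lieInvariant_of_apply_lie_apply hinv y
  have hindep : iSupIndep g := by
    rw [funext hg]
    refine (Module.End.eigenspaces_iSupIndep _).comp fun i j h => ?_
    exact_mod_cast (div_left_inj' two_ne_zero).mp h
  have horth (i j : ℤ) (hij : i + j ≠ 0) : g j ≤ orthogonal B (g i) := by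
    rw [hg, hg]
    refine eigenspace_le_orthogonal_eigenspace (hskew x) ?_
    rw [← add_div, div_ne_zero_iff]
    exact ⟨by exact_mod_cast hij, two_ne_zero⟩
  have hshift (k : ℤ) : (g k).map (ad ℂ L f) ≤ g (k - 2) :=
    Submodule.map_le_iff_le_comap.mpr fun a ha => by
      rw [Submodule.mem_comap, hg,
        show ((k - 2 : ℤ) : ℂ) / 2 = ((-2 : ℤ) : ℂ) / 2 + k / 2 by push_cast; ring]
      exact lie_mem_eigenspace_ad_add (hg (-2) ▸ hf) (hg k ▸ ha)
  have hdual : finrank ℂ (g (-1)) = finrank ℂ (g 1) := by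
    have hdiag' : ⨆ μ, (ad ℂ L x).eigenspace μ = ⊤ :=
      eq_top_iff.mpr (hdiag ▸ iSup_le fun k => hg k ▸ le_iSup _ _)
    rw [hg, hg, show ((-1 : ℤ) : ℂ) / 2 = -(((1 : ℤ) : ℂ) / 2) by push_cast; ring]
    exact finrank_eigenspace_neg hnd (hskew x) hdiag' _
  rw [finrank_ker_eq_of_ker_le_biSup_Iic hB hB₀ hindep hdiag horth (hskew f) hshift
    fun a ha => hgood a ha, hdual]
end
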